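/- Let d ≥ 2 be an integer and let a, b, c ∈ [0,1] satisfy a ≤ b and c ≤ b, and set (a', b', c') := φ(a, b, c). Then a', b', c' ∈ [0,1], a' ≤ b' and c' ≤ b'; explicitly, ((1+b)/(1+2b))^d ≤ ((1 + a + a·c)/(1 + 2a))^d ≤ 1 and b^d · ((1 + c + c²)/(1 + b + b·c))^d ≤ ((1 + a + a·c)/(1 + 2a))^d. -/
import Mathlib


noncomputable def fMap (d : ℕ) (α x : ℝ) : ℝ := ((1 + α * x) / (1 + 2 * x)) ^ d

noncomputable def gMap (d : ℕ) (b x : ℝ) : ℝ :=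
  b ^ d * ((1 + x + x ^ 2) / (1 + b + b * x)) ^ d

/-- `φ(a,b,c) = (f(1,b), f(1+c,a), g(b,c))`. -/
noncomputable def phiMap (d : ℕ) (a b c : ℝ) : ℝ × ℝ × ℝ :=
  (fMap d 1 b, fMap d (1 + c) a, gMap d b c)

theorem stmt_4 (d : ℕ) (hd : 2 ≤ d) (a b c : ℝ)
    (ha : a ∈ Set.Icc (0 : ℝ) 1) (hb : b ∈ Set.Icc (0 : ℝ) 1)
    (hc : c ∈ Set.Icc (0 : ℝ) 1) (hab : a ≤ b) (hcb : c ≤ b) :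
    (phiMap d a b c).1 ∈ Set.Icc (0 : ℝ) 1 ∧
    (phiMap d a b c).2.1 ∈ Set.Icc (0 : ℝ) 1 ∧
    (phiMap d a b c).2.2 ∈ Set.Icc (0 : ℝ) 1 ∧
    (phiMap d a b c).1 ≤ (phiMap d a b c).2.1 ∧
    (phiMap d a b c).2.2 ≤ (phiMap d a b c).2.1 ∧
    ((1 + b) / (1 + 2 * b)) ^ d ≤ ((1 + a + a * c) / (1 + 2 * a)) ^ d ∧
    ((1 + a + a * c) / (1 + 2 * a)) ^ d ≤ 1 ∧
    b ^ d * ((1 + c + c ^ 2) / (1 + b + b * c)) ^ d ≤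
      ((1 + a + a * c) / (1 + 2 * a)) ^ d := by
  obtain ⟨ha0, ha1⟩ := ha
  obtain ⟨hb0, hb1⟩ := hb
  obtain ⟨hc0, hc1⟩ := hc
  have hda : (0:ℝ) < 1 + 2 * a := by linarith
  have hdb : (0:ℝ) < 1 + 2 * b := by linarith
  have hdg : (0:ℝ) < 1 + b + b * c := by nlinarith
  -- base values
  have hx0 : (0:ℝ) ≤ (1 + b) / (1 + 2 * b) := by positivity
  have hx1 : (1 + b) / (1 + 2 * b) ≤ 1 := by
    rw [div_le_one hdb]; linarith
  have hy0 : (0:ℝ) ≤ (1 + a + a * c) / (1 + 2 * a) := by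
    apply div_nonneg _ hda.le; nlinarith
  have hy1 : (1 + a + a * c) / (1 + 2 * a) ≤ 1 := by
    rw [div_le_one hda]; nlinarith
  have hz0 : (0:ℝ) ≤ b * ((1 + c + c ^ 2) / (1 + b + b * c)) := by
    apply mul_nonneg hb0; apply div_nonneg _ hdg.le; nlinarith
  have hz1 : b * ((1 + c + c ^ 2) / (1 + b + b * c)) ≤ 1 := by
    rw [mul_div_assoc'] at *
    rw [div_le_one hdg]; nlinarith
  have hxy : (1 + b) / (1 + 2 * b) ≤ (1 + a + a * c) / (1 + 2 * a) := by
    rw [div_le_div_iff₀ hdb hda]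
    nlinarith [mul_nonneg ha0 hc0, mul_nonneg (mul_nonneg ha0 hb0) hc0]
  have hzy : b * ((1 + c + c ^ 2) / (1 + b + b * c)) ≤ (1 + a + a * c) / (1 + 2 * a) := by
    rw [mul_div_assoc', div_le_div_iff₀ hdg hda]
    nlinarith [mul_nonneg ha0 (sub_nonneg.2 hb1), mul_nonneg (sub_nonneg.2 hb1) (mul_nonneg hc0 hc0), mul_nonneg (mul_nonneg ha0 hb0) hc0, mul_nonneg (mul_nonneg ha0 hc0) (sub_nonneg.2 hc1), mul_nonneg hb0 hc0]
  have key1 : ((1 + b) / (1 + 2 * b)) ^ d ≤ ((1 + a + a * c) / (1 + 2 * a)) ^ d :=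
    pow_le_pow_left₀ hx0 hxy d
  have key2 : ((1 + a + a * c) / (1 + 2 * a)) ^ d ≤ 1 := pow_le_one₀ hy0 hy1
  have key3 : b ^ d * ((1 + c + c ^ 2) / (1 + b + b * c)) ^ d ≤
      ((1 + a + a * c) / (1 + 2 * a)) ^ d := by
    rw [← mul_pow]; exact pow_le_pow_left₀ hz0 hzy d
  have e2 : fMap d (1 + c) a = ((1 + a + a * c) / (1 + 2 * a)) ^ d := by
    unfold fMap; ring_nf
  refine ⟨⟨by unfold phiMap fMap; positivity, ?_⟩, ⟨?_, ?_⟩, ⟨?_, ?_⟩, ?_, ?_, key1, key2, key3⟩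
  · show fMap d 1 b ≤ 1
    unfold fMap
    rw [one_mul]
    exact pow_le_one₀ hx0 hx1
  · show (0:ℝ) ≤ fMap d (1 + c) a
    rw [e2]; positivity
  · show fMap d (1 + c) a ≤ 1
    rw [e2]; exact key2
  · show (0:ℝ) ≤ gMap d b c
    unfold gMap; positivity
  · show gMap d b c ≤ 1
    unfold gMap
    rw [← mul_pow]
    exact pow_le_one₀ hz0 hz1
  · show fMap d 1 b ≤ fMap d (1 + c) a
    rw [e2]; unfold fMap; rw [one_mul]; exact key1
  · show gMap d b c ≤ fMap d (1 + c) a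
    rw [e2]; unfold gMap; exact key3
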